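/- Let G be a finite simple graph and u₁, …, u_k distinct vertices of G. For a requirement vector r ∈ {0,1,2}^k, let m(r) be the minimum size of a set S of vertices such that (i) every vertex outside {u₁,…,u_k} is in S or adjacent to a vertex of S, and (ii) for each i: if rᵢ = 2 then uᵢ ∈ S, if rᵢ = 1 then uᵢ ∈ S or uᵢ is adjacent to a vertex of S, and if rᵢ = 0 there is no condition on uᵢ. Then for any two requirement vectors r and r' that agree in all coordinates except one coordinate i, where r'ᵢ < rᵢ, one has m(r') ≤ m(r) ≤ m(r') + 1. -/
import Mathlib


/-- For a requirement vector `r : Fin k → Fin 3` on distinguished vertices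
`u 0, …, u (k-1)`, the set `S` satisfies the requirements if (i) every vertex outside
`{u 0, …, u (k-1)}` is in `S` or adjacent to a vertex of `S`, and (ii) for each `i`:
if `r i = 2` then `u i ∈ S`, and if `r i = 1` then `u i` is in `S` or adjacent to a
vertex of `S` (no condition when `r i = 0`). -/
def SatisfiesReq {V : Type*} (G : SimpleGraph V) {k : ℕ} (u : Fin k → V)
    (r : Fin k → Fin 3) (S : Finset V) : Prop :=
  (∀ v : V, (∀ i, v ≠ u i) → (v ∈ S ∨ ∃ w ∈ S, G.Adj w v)) ∧
  (∀ i : Fin k,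
    (r i = 2 → u i ∈ S) ∧
    (r i = 1 → (u i ∈ S ∨ ∃ w ∈ S, G.Adj w (u i))))

/-- `m(r)`: the minimum size of a set satisfying the requirement vector `r`. -/
noncomputable def mReq {V : Type*} [Fintype V] (G : SimpleGraph V) {k : ℕ}
    (u : Fin k → V) (r : Fin k → Fin 3) : ℕ :=
  sInf {n | ∃ S : Finset V, SatisfiesReq G u r S ∧ S.card = n}

/-- The claim from Section 2.1 on general `k`-vertex cuts: the tensor
`r ↦ m(r)` of minimum rooted-dominating-set sizes decreases along each dimension,
and decreases by at most 1 at a time: if `r` and `r'` agree except in coordinate `i`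
where `r' i < r i`, then `m(r') ≤ m(r) ≤ m(r') + 1`. -/
theorem stmt15 {V : Type*} [Fintype V] (G : SimpleGraph V) {k : ℕ}
    (u : Fin k → V) (hinj : Function.Injective u)
    (r r' : Fin k → Fin 3) (i : Fin k)
    (hagree : ∀ j : Fin k, j ≠ i → r j = r' j) (hlt : r' i < r i) :
    mReq G u r' ≤ mReq G u r ∧ mReq G u r ≤ mReq G u r' + 1 := by
  classical
  have hne : ∀ rr : Fin k → Fin 3,
      {n | ∃ S : Finset V, SatisfiesReq G u rr S ∧ S.card = n}.Nonempty := by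
    intro rr
    exact ⟨Finset.univ.card, Finset.univ,
      ⟨fun v _ => Or.inl (Finset.mem_univ v),
       fun j => ⟨fun _ => Finset.mem_univ _, fun _ => Or.inl (Finset.mem_univ _)⟩⟩, rfl⟩
  have hltv := Fin.lt_def.mp hlt
  constructor
  · obtain ⟨S, hS, hcard⟩ := Nat.sInf_mem (hne r)
    have hS' : SatisfiesReq G u r' S := by
      refine ⟨hS.1, fun j => ⟨?_, ?_⟩⟩
      · intro h2
        by_cases hj : j = i
        · exfalso
          subst hj
          have hv : (r' j).val = 2 := by rw [h2]; rfl
          have := (r j).isLt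
          omega
        · exact (hS.2 j).1 (by rw [hagree j hj, h2])
      · intro h1
        by_cases hj : j = i
        · subst hj
          have hv : (r' j).val = 1 := by rw [h1]; rfl
          have h3 := (r j).isLt
          have : r j = 2 := Fin.ext (by omega)
          exact Or.inl ((hS.2 j).1 this)
        · exact (hS.2 j).2 (by rw [hagree j hj, h1])
    calc mReq G u r' ≤ S.card := Nat.sInf_le ⟨S, hS', rfl⟩
      _ = mReq G u r := hcard
  · obtain ⟨S, hS, hcard⟩ := Nat.sInf_mem (hne r')
    have hS' : SatisfiesReq G u r (insert (u i) S) := by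
      constructor
      · intro v hv
        rcases hS.1 v hv with h | ⟨w, hw, hadj⟩
        · exact Or.inl (Finset.mem_insert_of_mem h)
        · exact Or.inr ⟨w, Finset.mem_insert_of_mem hw, hadj⟩
      · intro j
        by_cases hj : j = i
        · subst hj
          exact ⟨fun _ => Finset.mem_insert_self _ _,
                 fun _ => Or.inl (Finset.mem_insert_self _ _)⟩
        · refine ⟨fun h2 => Finset.mem_insert_of_mem ((hS.2 j).1 (by rw [← hagree j hj]; exact h2)), ?_⟩
          intro h1
          rcases (hS.2 j).2 (by rw [← hagree j hj]; exact h1) with h | ⟨w, hw, hadj⟩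
          · exact Or.inl (Finset.mem_insert_of_mem h)
          · exact Or.inr ⟨w, Finset.mem_insert_of_mem hw, hadj⟩
    calc mReq G u r ≤ (insert (u i) S).card := Nat.sInf_le ⟨_, hS', rfl⟩
      _ ≤ S.card + 1 := Finset.card_insert_le _ _
      _ = mReq G u r' + 1 := by rw [mReq, ← hcard]
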